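/- Consider the Johnson graph J(4,2) with vertices labelled by 2-subsets of {1,2,3,4}, the GKM graph Γ₂ of G₂(ℂ⁴), with axial function into ℤ³ given by α(E_{i,j}^{i,k}) = −a_j + a_k, α(E_{i,j}^{j,k}) = −a_i + a_k (a₁,a₂,a₃ a basis, a₄ = 0) and the unique connection. Then rk 𝒜(Γ₂, α₂, ∇₂) = 3, so the (4,3)-type GKM graph Γ₂ admits no extension to a (4,4)-type GKM graph. -/

import Mathlib

/-- The combinatorial core of an `m`-valent graph: oriented edges with reversal,
orderings of the `m` outgoing edges at each vertex, and a connection. -/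
structure GKMCore (V E : Type*) (m : ℕ) where
  src : E → V
  tgt : E → V
  rev : E → E
  rev_rev : ∀ e, rev (rev e) = e
  src_rev : ∀ e, src (rev e) = tgt e
  no_loops : ∀ e, src e ≠ tgt e
  /-- the `j`-th outgoing edge at vertex `p` -/
  ord : V → Fin m → E
  ord_src : ∀ p j, src (ord p j) = p
  /-- the index of an edge among the outgoing edges at its source -/
  eidx : E → Fin m
  ord_eidx : ∀ e, ord (src e) (eidx e) = e
  eidx_ord : ∀ p j, eidx (ord p j) = j
  /-- the connection: `conn e` maps outgoing edges at `src e` to outgoing edges at `tgt e` -/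
  conn : E → E → E
  conn_src : ∀ e e', src e' = src e → src (conn e e') = tgt e
  conn_self : ∀ e, conn e e = rev e
  conn_conn : ∀ e e', src e' = src e → conn (rev e) (conn e e') = e'

namespace GKMCore

variable {V E : Type*} {m : ℕ}

/-- The permutation of `Fin m` induced by the connection along `e`:
`σ_e` is characterized by `∇_e (e_{σ(j), src e}) = e_{j, tgt e}`. -/
def sigma (C : GKMCore V E m) (e : E) (j : Fin m) : Fin m :=
  C.eidx (C.conn (C.rev e) (C.ord (C.tgt e) j))

/-- Adjacency of vertices through an oriented edge. -/
def Adj (C : GKMCore V E m) (p q : V) : Prop := ∃ e, C.src e = p ∧ C.tgt e = q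

/-- Connectedness of the graph. -/
def Connected (C : GKMCore V E m) : Prop := ∀ p q, Relation.ReflTransGen C.Adj p q

end GKMCore

/-- An axial function with values in `ℤⁿ ≅ H²(BTⁿ)` on the core `C`, compatible
with the connection `C.conn` via (given) congruence coefficients: this is the
data of a GKM graph of type `(m, n)` (effectiveness stated separately). -/
structure AxialOn {V E : Type*} {m : ℕ} (C : GKMCore V E m) (n : ℕ) where
  α : E → Fin n → ℤ
  α_rev : ∀ e, α (C.rev e) = - α e
  α_ne : ∀ e, α e ≠ 0
  pairwise_indep : ∀ e e', C.src e = C.src e' → e ≠ e' → LinearIndependent ℤ ![α e, α e']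
  /-- the congruence coefficients `c_e(e')` -/
  coeff : E → E → ℤ
  congruence : ∀ e e', C.src e' = C.src e → α (C.conn e e') = α e' + coeff e e' • α e

namespace AxialOn

variable {V E : Type*} {m n : ℕ} {C : GKMCore V E m}

/-- Effectiveness: at every vertex the values of the axial function span `ℤⁿ`. -/
def Effective (A : AxialOn C n) : Prop :=
  ∀ p, Submodule.span ℤ (Set.range fun j => A.α (C.ord p j)) = ⊤

/-- The invariant function `c : E(Γ) → ℤ^m`, the vector of congruence
coefficients of `e` on the (ordered) outgoing edges at `src e`. -/
def cvec (A : AxialOn C n) (e : E) : Fin m → ℤ := fun j => A.coeff e (C.ord (C.src e) j)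

/-- `A'` is an extension of `A` (same graph, same connection) via a surjective
linear projection `π` with `π ∘ α' = α`. -/
def Extends {l : ℕ} (A' : AxialOn C l) (A : AxialOn C n) : Prop :=
  ∃ π : (Fin l → ℤ) →ₗ[ℤ] (Fin n → ℤ), Function.Surjective π ∧ ∀ e, π (A'.α e) = A.α e

/-- The defining relation of the group of axial functions:
`N_e (f (src e)) - f (tgt e) = f (tgt e)_{ē} • c(ē)` for every edge `e`. -/
def IsAxialClass (A : AxialOn C n) (f : V → Fin m → ℤ) : Prop :=
  ∀ e j, f (C.src e) (C.sigma e j) - f (C.tgt e) j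
      = f (C.tgt e) (C.eidx (C.rev e)) * A.cvec (C.rev e) j

/-- The group of axial functions `𝒜(Γ, α, ∇)` as a `ℤ`-submodule of
`⊕_{p ∈ V(Γ)} ℤ^m`. -/
def axialModule (A : AxialOn C n) : Submodule ℤ (V → Fin m → ℤ) where
  carrier := {f | A.IsAxialClass f}
  zero_mem' := by intro e j; simp [IsAxialClass, cvec]
  add_mem' := by
    intro f g hf hg e j
    have h1 := hf e j
    have h2 := hg e j
    simp only [Pi.add_apply]
    linear_combination h1 + h2
  smul_mem' := by
    intro a f hf e j
    have h1 := hf e j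
    simp only [Pi.smul_apply, smul_eq_mul]
    linear_combination a * h1

end AxialOn

/-! The Johnson graph `J(n+2, 2)`, the GKM graph of the complex Grassmannian
`G₂(ℂ^{n+2})` with the standard effective `T^{n+1}`-action. -/

/-- Vertices: 2-element subsets of `[n+2]`. -/
def JV (n : ℕ) : Type := {s : Finset (Fin (n + 2)) // s.card = 2}

/-- Oriented edges: ordered pairs of distinct intersecting 2-subsets. -/
def JE (n : ℕ) : Type :=
  {x : JV n × JV n // x.1 ≠ x.2 ∧ (x.1.1 ∩ x.2.1).Nonempty}

/-- The vertex `{i, j}`. -/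
def mkV {n : ℕ} (i j : Fin (n + 2)) (h : i ≠ j) : JV n :=
  ⟨{i, j}, Finset.card_pair h⟩

/-- The oriented edge `E_{i,j}^{i,k}` from `{i, j}` to `{i, k}`. -/
def mkE {n : ℕ} (i j k : Fin (n + 2)) (hij : i ≠ j) (hik : i ≠ k) (hjk : j ≠ k) :
    JE n :=
  ⟨(mkV i j hij, mkV i k hik), by
    constructor
    · intro h
      have h2 : ({i, j} : Finset (Fin (n + 2))) = {i, k} :=
        congrArg Subtype.val h
      have hj : j ∈ ({i, k} : Finset (Fin (n + 2))) := by
        rw [← h2]; simp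
      simp only [Finset.mem_insert, Finset.mem_singleton] at hj
      rcases hj with h1 | h1
      · exact hij h1.symm
      · exact hjk h1
    · exact ⟨i, by simp [mkV]⟩⟩

/-- The vectors `a₁, …, a_{n+1}, a_{n+2}` in `ℤ^{n+1}`: `a₁, …, a_{n+1}` a
basis `B` and `a_{n+2} = 0`. -/
noncomputable def avec {n : ℕ} (B : Module.Basis (Fin (n + 1)) ℤ (Fin (n + 1) → ℤ))
    (k : Fin (n + 2)) : Fin (n + 1) → ℤ :=
  if h : (k : ℕ) < n + 1 then B ⟨k, h⟩ else 0


/-! ### Auxiliary material -/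

instance {n : ℕ} : Fintype (JV n) := by unfold JV; infer_instance

lemma JE_decomp {n : ℕ} (e : JE n) : ∃ (i j k : Fin (n + 2)) (hij : i ≠ j) (hik : i ≠ k)
    (hjk : j ≠ k), e = mkE i j k hij hik hjk := by
  obtain ⟨⟨⟨s, hs⟩, ⟨t, ht⟩⟩, hne, hint⟩ := e
  obtain ⟨i, hi⟩ := hint
  simp only [Finset.mem_inter] at hi
  obtain ⟨his, hit⟩ := hi
  have hpair : ∀ (u : Finset (Fin (n + 2))), u.card = 2 → i ∈ u →
      ∃ j, i ≠ j ∧ u = {i, j} := by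
    intro u hu hiu
    obtain ⟨a, b, hab, huab⟩ := Finset.card_eq_two.mp hu
    subst huab
    rcases Finset.mem_insert.mp hiu with h | h
    · subst h; exact ⟨b, hab, rfl⟩
    · rw [Finset.mem_singleton] at h; subst h
      exact ⟨a, hab.symm, Finset.pair_comm _ _⟩
  obtain ⟨j, hij, hsj⟩ := hpair s hs his
  obtain ⟨k, hik, htk⟩ := hpair t ht hit
  have hjk : j ≠ k := by
    rintro rfl
    exact hne (Subtype.ext (hsj.trans htk.symm))
  exact ⟨i, j, k, hij, hik, hjk, Subtype.ext (Prod.ext (Subtype.ext hsj) (Subtype.ext htk))⟩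

lemma coeff_determined {V E : Type*} {m n : ℕ} {C : GKMCore V E m} (A : AxialOn C n)
    (e e' : E) (h : C.src e' = C.src e) (c : ℤ)
    (hc : A.α (C.conn e e') = A.α e' + c • A.α e) : A.coeff e e' = c := by
  have h2 := (A.congruence e e' h).symm.trans hc
  have h3 : (A.coeff e e' - c) • A.α e = 0 := by
    rw [sub_smul, add_left_cancel h2, sub_self]
  by_contra hne
  apply A.α_ne e
  funext t
  have ht := congrFun h3 t
  simp only [Pi.smul_apply, smul_eq_mul, Pi.zero_apply] at ht
  rcases mul_eq_zero.mp ht with h' | h'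
  · exact absurd (sub_eq_zero.mp h') hne
  · exact h'

lemma GKMCore.tgt_rev {V E : Type*} {m : ℕ} (C : GKMCore V E m) (e : E) :
    C.tgt (C.rev e) = C.src e := by
  have h := C.src_rev (C.rev e); rw [C.rev_rev] at h; exact h.symm

/-- The relation satisfied by an axial class, in edge form. -/
lemma axial_rel {V E : Type*} {m n : ℕ} {C : GKMCore V E m} (A : AxialOn C n)
    {f : V → Fin m → ℤ} (hf : A.IsAxialClass f) (g e' : E) (h : C.src e' = C.src g) :
    f (C.src (C.conn g e')) (C.eidx (C.conn g e')) =
      f (C.src e') (C.eidx e') + f (C.src g) (C.eidx g) * A.coeff g e' := by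
  have hj := hf (C.rev g) (C.eidx e')
  have hord : C.ord (C.tgt (C.rev g)) (C.eidx e') = e' := by
    rw [C.tgt_rev, ← h]; exact C.ord_eidx e'
  have hsig : C.sigma (C.rev g) (C.eidx e') = C.eidx (C.conn g e') := by
    unfold GKMCore.sigma
    rw [C.rev_rev, hord]
  have hcv : A.cvec (C.rev (C.rev g)) (C.eidx e') = A.coeff g e' := by
    unfold AxialOn.cvec
    rw [C.rev_rev, ← h, C.ord_eidx]
  rw [hsig, hcv, C.rev_rev, C.src_rev, C.tgt_rev] at hj
  have hsc : C.src (C.conn g e') = C.tgt g := C.conn_src g e' h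
  rw [hsc, h]
  linarith [hj]

/-- The evaluation linear map associated to a vector-valued edge function. -/
def evalMap {V E : Type*} {m : ℕ} (C : GKMCore V E m) {N : ℕ} (β : E → Fin N → ℤ) :
    (Fin N → ℤ) →ₗ[ℤ] (V → Fin m → ℤ) where
  toFun v := fun p j => ∑ i, v i * β (C.ord p j) i
  map_add' u v := by
    funext p j
    simp [add_mul, Finset.sum_add_distrib]
  map_smul' c v := by
    funext p j
    simp only [Pi.smul_apply, smul_eq_mul, RingHom.id_apply]
    rw [Finset.mul_sum]
    exact Finset.sum_congr rfl fun i _ => by ring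

lemma mem_axial_of_compat {V E : Type*} {m n N : ℕ} {C : GKMCore V E m} (A : AxialOn C n)
    (β : E → Fin N → ℤ)
    (hβ : ∀ e e', C.src e' = C.src e → β (C.conn e e') = β e' + A.coeff e e' • β e)
    (v : Fin N → ℤ) :
    evalMap C β v ∈ A.axialModule := by
  show A.IsAxialClass _
  intro e j
  set e' := C.ord (C.tgt e) j with he'
  have hse' : C.src e' = C.src (C.rev e) := by rw [he', C.ord_src, C.src_rev]
  have h1 : C.ord (C.src e) (C.sigma e j) = C.conn (C.rev e) e' := by
    have hs : C.src (C.conn (C.rev e) e') = C.src e := by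
      rw [C.conn_src _ _ hse', C.tgt_rev]
    have h := C.ord_eidx (C.conn (C.rev e) e')
    rw [hs] at h
    exact h
  have h2 : C.ord (C.tgt e) (C.eidx (C.rev e)) = C.rev e := by
    have h := C.ord_eidx (C.rev e); rw [C.src_rev] at h; exact h
  have hc : A.cvec (C.rev e) j = A.coeff (C.rev e) e' := by
    unfold AxialOn.cvec
    rw [C.src_rev]
  have hcong := hβ (C.rev e) e' hse'
  show (∑ i, v i * β (C.ord (C.src e) (C.sigma e j)) i)
        - (∑ i, v i * β (C.ord (C.tgt e) j) i)
      = (∑ i, v i * β (C.ord (C.tgt e) (C.eidx (C.rev e))) i) * A.cvec (C.rev e) j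
  rw [h1, h2, hc, hcong, ← he']
  rw [Finset.sum_mul, ← Finset.sum_sub_distrib]
  exact Finset.sum_congr rfl fun i _ => by
    simp only [Pi.add_apply, Pi.smul_apply, smul_eq_mul]
    ring

/-- The dot-product linear functional. -/
def dotL {N : ℕ} (v : Fin N → ℤ) : (Fin N → ℤ) →ₗ[ℤ] ℤ where
  toFun w := ∑ i, v i * w i
  map_add' x y := by simp [mul_add, Finset.sum_add_distrib]
  map_smul' c w := by
    simp only [Pi.smul_apply, smul_eq_mul, RingHom.id_apply]
    rw [Finset.mul_sum]
    exact Finset.sum_congr rfl fun i _ => by ring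

lemma dotL_single {N : ℕ} (v : Fin N → ℤ) (i : Fin N) : dotL v (Pi.single i 1) = v i := by
  have h : dotL v (Pi.single i 1) = ∑ t, v t * (Pi.single i 1 : Fin N → ℤ) t := rfl
  rw [h]
  simp [Pi.single_apply, mul_ite, Finset.sum_ite_eq']

/-- A proof-irrelevant repackaging of edge values. -/
def FEfun (F : JE 2 → ℤ) (i j k : Fin 4) : ℤ :=
  if h : i ≠ j ∧ i ≠ k ∧ j ≠ k then F (mkE i j k h.1 h.2.1 h.2.2) else 0

lemma FEfun_eq (F : JE 2 → ℤ) (i j k : Fin 4) (h1 : i ≠ j) (h2 : i ≠ k) (h3 : j ≠ k) :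
    F (mkE i j k h1 h2 h3) = FEfun F i j k := by
  unfold FEfun
  rw [dif_pos ⟨h1, h2, h3⟩]

lemma FEfun_invalid (F : JE 2 → ℤ) {i j k : Fin 4} (h : ¬(i ≠ j ∧ i ≠ k ∧ j ≠ k)) :
    FEfun F i j k = 0 := dif_neg h

/-- for the GKM graph `Γ₂` of `G₂(ℂ⁴)` — the Johnson graph
`J(4,2)` (octahedron) with axial function into `ℤ³` given by
`α(E_{i,j}^{i,k}) = −a_j + a_k` (`a₁,a₂,a₃` a basis, `a₄ = 0`) and the unique
connection — the group of axial functions has rank 3; hence this (4,3)-type GKM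
graph admits no extension to a (4,4)-type GKM graph. -/
theorem grassmannian4_rank_three_no_extension
    (B : Module.Basis (Fin 3) ℤ (Fin 3 → ℤ))
    (C : GKMCore (JV 2) (JE 2) 4)
    (hsrc : ∀ e, C.src e = e.1.1) (htgt : ∀ e, C.tgt e = e.1.2)
    (hrev : ∀ e, (C.rev e).1 = (e.1.2, e.1.1))
    (A : AxialOn C 3)
    (hα : ∀ (i j k : Fin 4) (hij : i ≠ j) (hik : i ≠ k) (hjk : j ≠ k),
      A.α (mkE i j k hij hik hjk) = avec B k - avec B j)
    (hconn₁ : ∀ (i j k l : Fin 4) (hij : i ≠ j) (hik : i ≠ k) (hjk : j ≠ k)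
      (hil : i ≠ l) (hjl : j ≠ l) (hkl : k ≠ l),
      C.conn (mkE i j k hij hik hjk) (mkE i j l hij hil hjl)
        = mkE i k l hik hil hkl)
    (hconn₂ : ∀ (i j k l : Fin 4) (hij : i ≠ j) (hik : i ≠ k) (hjk : j ≠ k)
      (hil : i ≠ l) (hjl : j ≠ l) (hkl : k ≠ l),
      C.conn (mkE i j k hij hik hjk) (mkE j i l (Ne.symm hij) hjl hil)
        = mkE k i l (Ne.symm hik) hkl hil)
    (hconn₃ : ∀ (i j k : Fin 4) (hij : i ≠ j) (hik : i ≠ k) (hjk : j ≠ k),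
      C.conn (mkE i j k hij hik hjk) (mkE j i k (Ne.symm hij) hjk hik)
        = mkE k i j (Ne.symm hik) (Ne.symm hjk) hij) :
    Module.finrank ℤ A.axialModule = 3 ∧
    ¬∃ A' : AxialOn C 4, A'.Effective ∧ A'.Extends A := by
  classical
  haveI : IsNoetherian ℤ (JV 2 → Fin 4 → ℤ) :=
    isNoetherian_of_isNoetherianRing_of_finite ℤ _
  haveI : Module.Finite ℤ ↥(A.axialModule) := inferInstance
  -- coefficient computations
  have c0 : ∀ e : JE 2, A.coeff e e = -2 := by
    intro e
    apply coeff_determined A e e rfl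
    rw [C.conn_self, A.α_rev]
    funext t
    simp only [Pi.neg_apply, Pi.add_apply, Pi.smul_apply, smul_eq_mul]
    ring
  have c1 : ∀ (i j k l : Fin 4) (hij : i ≠ j) (hik : i ≠ k) (hjk : j ≠ k)
      (hil : i ≠ l) (hjl : j ≠ l) (hkl : k ≠ l),
      A.coeff (mkE i j k hij hik hjk) (mkE i j l hij hil hjl) = -1 := by
    intro i j k l hij hik hjk hil hjl hkl
    apply coeff_determined A _ _ (by rw [hsrc, hsrc]; rfl)
    rw [hconn₁ i j k l hij hik hjk hil hjl hkl, hα i k l hik hil hkl,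
      hα i j l hij hil hjl, hα i j k hij hik hjk]
    funext t
    simp only [Pi.sub_apply, Pi.add_apply, Pi.smul_apply, smul_eq_mul]
    ring
  have c2 : ∀ (i j k l : Fin 4) (hij : i ≠ j) (hik : i ≠ k) (hjk : j ≠ k)
      (hil : i ≠ l) (hjl : j ≠ l) (hkl : k ≠ l),
      A.coeff (mkE i j k hij hik hjk) (mkE j i l (Ne.symm hij) hjl hil) = 0 := by
    intro i j k l hij hik hjk hil hjl hkl
    apply coeff_determined A _ _
      (by rw [hsrc, hsrc]; exact Subtype.ext (Finset.pair_comm j i))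
    rw [hconn₂ i j k l hij hik hjk hil hjl hkl, hα k i l (Ne.symm hik) hkl hil,
      hα j i l (Ne.symm hij) hjl hil, hα i j k hij hik hjk]
    funext t
    simp only [Pi.sub_apply, Pi.add_apply, Pi.smul_apply, smul_eq_mul]
    ring
  have c3 : ∀ (i j k : Fin 4) (hij : i ≠ j) (hik : i ≠ k) (hjk : j ≠ k),
      A.coeff (mkE i j k hij hik hjk) (mkE j i k (Ne.symm hij) hjk hik) = -1 := by
    intro i j k hij hik hjk
    apply coeff_determined A _ _
      (by rw [hsrc, hsrc]; exact Subtype.ext (Finset.pair_comm j i))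
    rw [hconn₃ i j k hij hik hjk, hα k i j (Ne.symm hik) (Ne.symm hjk) hij,
      hα j i k (Ne.symm hij) hjk hik, hα i j k hij hik hjk]
    funext t
    simp only [Pi.sub_apply, Pi.add_apply, Pi.smul_apply, smul_eq_mul]
    ring
  -- the three reference edges
  let eA : JE 2 := mkE 1 3 0 (by decide) (by decide) (by decide)
  let eB : JE 2 := mkE 0 3 1 (by decide) (by decide) (by decide)
  let eC : JE 2 := mkE 0 3 2 (by decide) (by decide) (by decide)
  -- avec computations
  have ha0 : avec (n := 2) B 0 = B 0 := rfl
  have ha1 : avec (n := 2) B 1 = B 1 := rfl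
  have ha2 : avec (n := 2) B 2 = B 2 := rfl
  have ha3 : avec (n := 2) B 3 = 0 := rfl
  -- the lower-bound injection ℤ³ ↪ 𝒜
  let L1 : (Fin 3 → ℤ) →ₗ[ℤ] A.axialModule :=
    (evalMap C A.α).codRestrict A.axialModule
      (fun v => mem_axial_of_compat A A.α (fun e e' h => A.congruence e e' h) v)
  have hL1inj : Function.Injective L1 := by
    rw [← LinearMap.ker_eq_bot, LinearMap.ker_eq_bot']
    intro v hv
    have hv' : evalMap C A.α v = 0 := congrArg Subtype.val hv
    have he : ∀ e : JE 2, ∑ i, v i * A.α e i = 0 := by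
      intro e
      have h : (∑ i, v i * A.α (C.ord (C.src e) (C.eidx e)) i) = 0 :=
        congrFun (congrFun hv' (C.src e)) (C.eidx e)
      rwa [C.ord_eidx] at h
    have hb : ∀ b : Fin 3, dotL v (B b) = 0 := by
      have h0 := he eA
      have h1 := he eB
      have h2 := he eC
      rw [hα 1 3 0 (by decide) (by decide) (by decide), ha0, ha3] at h0
      rw [hα 0 3 1 (by decide) (by decide) (by decide), ha1, ha3] at h1
      rw [hα 0 3 2 (by decide) (by decide) (by decide), ha2, ha3] at h2
      intro b
      fin_cases b
      · show (∑ i, v i * B 0 i) = 0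
        simpa using h0
      · show (∑ i, v i * B 1 i) = 0
        simpa using h1
      · show (∑ i, v i * B 2 i) = 0
        simpa using h2
    have hφ : dotL v = (0 : (Fin 3 → ℤ) →ₗ[ℤ] ℤ) :=
      B.ext fun b => by rw [hb b]; simp
    funext i
    have h := dotL_single v i
    rw [hφ] at h
    simpa using h.symm
  -- the upper-bound injection 𝒜 ↪ ℤ³
  let L2 : A.axialModule →ₗ[ℤ] (Fin 3 → ℤ) :=
    { toFun := fun f k =>
        if k = 0 then (f : JV 2 → Fin 4 → ℤ) (C.src eA) (C.eidx eA)
        else if k = 1 then (f : JV 2 → Fin 4 → ℤ) (C.src eB) (C.eidx eB)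
        else (f : JV 2 → Fin 4 → ℤ) (C.src eC) (C.eidx eC)
      map_add' := by intro f g; funext k; simp only [Pi.add_apply]; split_ifs <;> simp
      map_smul' := by
        intro c f; funext k
        simp only [Pi.smul_apply, smul_eq_mul, RingHom.id_apply]
        split_ifs <;> simp }
  have hL2inj : Function.Injective L2 := by
    rw [← LinearMap.ker_eq_bot, LinearMap.ker_eq_bot']
    rintro ⟨f, hfmem⟩ hf0
    have hA0 : f (C.src eA) (C.eidx eA) = 0 := by
      have h : (if (0 : Fin 3) = 0 then f (C.src eA) (C.eidx eA)
          else if (0 : Fin 3) = 1 then f (C.src eB) (C.eidx eB)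
          else f (C.src eC) (C.eidx eC)) = 0 := congrFun hf0 0
      rwa [if_pos rfl] at h
    have hB0 : f (C.src eB) (C.eidx eB) = 0 := by
      have h : (if (1 : Fin 3) = 0 then f (C.src eA) (C.eidx eA)
          else if (1 : Fin 3) = 1 then f (C.src eB) (C.eidx eB)
          else f (C.src eC) (C.eidx eC)) = 0 := congrFun hf0 1
      rwa [if_neg (by decide), if_pos rfl] at h
    have hC0 : f (C.src eC) (C.eidx eC) = 0 := by
      have h : (if (2 : Fin 3) = 0 then f (C.src eA) (C.eidx eA)
          else if (2 : Fin 3) = 1 then f (C.src eB) (C.eidx eB)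
          else f (C.src eC) (C.eidx eC)) = 0 := congrFun hf0 2
      rwa [if_neg (by decide), if_neg (by decide)] at h
    set F : JE 2 → ℤ := fun e => f (C.src e) (C.eidx e) with hFdef
    have relF : ∀ g e', C.src e' = C.src g →
        F (C.conn g e') = F e' + F g * A.coeff g e' :=
      fun g e' h => axial_rel A hfmem g e' h
    have FR1 : ∀ (i j k l : Fin 4) (hij : i ≠ j) (hik : i ≠ k) (hjk : j ≠ k)
        (hil : i ≠ l) (hjl : j ≠ l) (hkl : k ≠ l),
        FEfun F i k l = FEfun F i j l - FEfun F i j k := by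
      intro i j k l hij hik hjk hil hjl hkl
      have h := relF (mkE i j k hij hik hjk) (mkE i j l hij hil hjl)
        (by rw [hsrc, hsrc]; rfl)
      rw [hconn₁ i j k l hij hik hjk hil hjl hkl,
        c1 i j k l hij hik hjk hil hjl hkl,
        FEfun_eq F i k l hik hil hkl, FEfun_eq F i j l hij hil hjl,
        FEfun_eq F i j k hij hik hjk] at h
      linarith
    have FR2 : ∀ (i j k l : Fin 4) (hij : i ≠ j) (hik : i ≠ k) (hjk : j ≠ k)
        (hil : i ≠ l) (hjl : j ≠ l) (hkl : k ≠ l),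
        FEfun F k i l = FEfun F j i l := by
      intro i j k l hij hik hjk hil hjl hkl
      have h := relF (mkE i j k hij hik hjk) (mkE j i l (Ne.symm hij) hjl hil)
        (by rw [hsrc, hsrc]; exact Subtype.ext (Finset.pair_comm j i))
      rw [hconn₂ i j k l hij hik hjk hil hjl hkl,
        c2 i j k l hij hik hjk hil hjl hkl,
        FEfun_eq F k i l (Ne.symm hik) hkl hil,
        FEfun_eq F j i l (Ne.symm hij) hjl hil] at h
      linarith
    have hrevE : ∀ (i j k : Fin 4) (h1 : i ≠ j) (h2 : i ≠ k) (h3 : j ≠ k),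
        C.rev (mkE i j k h1 h2 h3) = mkE i k j h2 h1 (Ne.symm h3) :=
      fun i j k h1 h2 h3 => Subtype.ext (hrev _)
    have FRrev : ∀ (i j k : Fin 4) (h1 : i ≠ j) (h2 : i ≠ k) (h3 : j ≠ k),
        FEfun F i k j = - FEfun F i j k := by
      intro i j k h1 h2 h3
      have h := relF (mkE i j k h1 h2 h3) (mkE i j k h1 h2 h3) rfl
      rw [C.conn_self, c0, hrevE i j k h1 h2 h3,
        FEfun_eq F i k j h2 h1 (Ne.symm h3), FEfun_eq F i j k h1 h2 h3] at h
      linarith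
    -- the 24 edge values all vanish
    have z130 : FEfun F 1 3 0 = 0 :=
      (FEfun_eq F 1 3 0 (by decide) (by decide) (by decide)).symm.trans hA0
    have z031 : FEfun F 0 3 1 = 0 :=
      (FEfun_eq F 0 3 1 (by decide) (by decide) (by decide)).symm.trans hB0
    have z032 : FEfun F 0 3 2 = 0 :=
      (FEfun_eq F 0 3 2 (by decide) (by decide) (by decide)).symm.trans hC0
    have z230 : FEfun F 2 3 0 = 0 :=
      (FR2 3 1 2 0 (by decide) (by decide) (by decide) (by decide) (by decide)
        (by decide)).trans z130
    have z231 : FEfun F 2 3 1 = 0 :=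
      (FR2 3 0 2 1 (by decide) (by decide) (by decide) (by decide) (by decide)
        (by decide)).trans z031
    have z132 : FEfun F 1 3 2 = 0 :=
      (FR2 3 0 1 2 (by decide) (by decide) (by decide) (by decide) (by decide)
        (by decide)).trans z032
    have z103 : FEfun F 1 0 3 = 0 := by
      rw [FRrev 1 3 0 (by decide) (by decide) (by decide), z130, neg_zero]
    have z203 : FEfun F 2 0 3 = 0 := by
      rw [FRrev 2 3 0 (by decide) (by decide) (by decide), z230, neg_zero]
    have z013 : FEfun F 0 1 3 = 0 := by
      rw [FRrev 0 3 1 (by decide) (by decide) (by decide), z031, neg_zero]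
    have z213 : FEfun F 2 1 3 = 0 := by
      rw [FRrev 2 3 1 (by decide) (by decide) (by decide), z231, neg_zero]
    have z023 : FEfun F 0 2 3 = 0 := by
      rw [FRrev 0 3 2 (by decide) (by decide) (by decide), z032, neg_zero]
    have z123 : FEfun F 1 2 3 = 0 := by
      rw [FRrev 1 3 2 (by decide) (by decide) (by decide), z132, neg_zero]
    have z012 : FEfun F 0 1 2 = 0 := by
      rw [FR1 0 3 1 2 (by decide) (by decide) (by decide) (by decide) (by decide) (by decide),
        z032, z031, sub_zero]
    have z021 : FEfun F 0 2 1 = 0 := by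
      rw [FR1 0 3 2 1 (by decide) (by decide) (by decide) (by decide) (by decide) (by decide),
        z031, z032, sub_zero]
    have z102 : FEfun F 1 0 2 = 0 := by
      rw [FR1 1 3 0 2 (by decide) (by decide) (by decide) (by decide) (by decide) (by decide),
        z132, z130, sub_zero]
    have z120 : FEfun F 1 2 0 = 0 := by
      rw [FR1 1 3 2 0 (by decide) (by decide) (by decide) (by decide) (by decide) (by decide),
        z130, z132, sub_zero]
    have z201 : FEfun F 2 0 1 = 0 := by
      rw [FR1 2 3 0 1 (by decide) (by decide) (by decide) (by decide) (by decide) (by decide),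
        z231, z230, sub_zero]
    have z210 : FEfun F 2 1 0 = 0 := by
      rw [FR1 2 3 1 0 (by decide) (by decide) (by decide) (by decide) (by decide) (by decide),
        z230, z231, sub_zero]
    have z301 : FEfun F 3 0 1 = 0 :=
      (FR2 0 2 3 1 (by decide) (by decide) (by decide) (by decide) (by decide)
        (by decide)).trans z201
    have z302 : FEfun F 3 0 2 = 0 :=
      (FR2 0 1 3 2 (by decide) (by decide) (by decide) (by decide) (by decide)
        (by decide)).trans z102
    have z310 : FEfun F 3 1 0 = 0 :=
      (FR2 1 2 3 0 (by decide) (by decide) (by decide) (by decide) (by decide)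
        (by decide)).trans z210
    have z312 : FEfun F 3 1 2 = 0 :=
      (FR2 1 0 3 2 (by decide) (by decide) (by decide) (by decide) (by decide)
        (by decide)).trans z012
    have z320 : FEfun F 3 2 0 = 0 :=
      (FR2 2 1 3 0 (by decide) (by decide) (by decide) (by decide) (by decide)
        (by decide)).trans z120
    have z321 : FEfun F 3 2 1 = 0 :=
      (FR2 2 0 3 1 (by decide) (by decide) (by decide) (by decide) (by decide)
        (by decide)).trans z021
    have hzall : ∀ (i j k : Fin 4), FEfun F i j k = 0 := by
      intro i j k
      fin_cases i <;> fin_cases j <;> fin_cases k <;>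
        first
          | exact FEfun_invalid F (by decide)
          | exact z130 | exact z230 | exact z031 | exact z231 | exact z032 | exact z132
          | exact z103 | exact z203 | exact z013 | exact z213 | exact z023 | exact z123
          | exact z012 | exact z021 | exact z102 | exact z120 | exact z201 | exact z210
          | exact z301 | exact z302 | exact z310 | exact z312 | exact z320 | exact z321
    apply Subtype.ext
    funext p j
    simp only [ZeroMemClass.coe_zero, Pi.zero_apply]
    obtain ⟨a, b, c, h1, h2, h3, he⟩ := JE_decomp (C.ord p j)
    have hfj : f p j = F (C.ord p j) := by
      show f p j = f (C.src (C.ord p j)) (C.eidx (C.ord p j))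
      rw [C.ord_src, C.eidx_ord]
    rw [hfj, he, FEfun_eq F a b c h1 h2 h3, hzall]
  have hrank : Module.finrank ℤ A.axialModule = 3 := by
    have h1 : 3 ≤ Module.finrank ℤ A.axialModule := by
      have h := LinearMap.finrank_le_finrank_of_injective hL1inj
      rwa [Module.finrank_pi, Fintype.card_fin] at h
    have h2 : Module.finrank ℤ A.axialModule ≤ 3 := by
      have h := LinearMap.finrank_le_finrank_of_injective hL2inj
      rwa [Module.finrank_pi, Fintype.card_fin] at h
    omega
  refine ⟨hrank, ?_⟩
  rintro ⟨A', hEff, π, hπsurj, hπα⟩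
  have hcoeff : ∀ e e', C.src e' = C.src e → A'.coeff e e' = A.coeff e e' := by
    intro e e' h
    have hc : A.α (C.conn e e') = A.α e' + A'.coeff e e' • A.α e := by
      calc A.α (C.conn e e') = π (A'.α (C.conn e e')) := (hπα _).symm
        _ = π (A'.α e' + A'.coeff e e' • A'.α e) := by rw [A'.congruence e e' h]
        _ = π (A'.α e') + A'.coeff e e' • π (A'.α e) := by rw [map_add, map_smul]
        _ = A.α e' + A'.coeff e e' • A.α e := by rw [hπα, hπα]
    exact (coeff_determined A e e' h _ hc).symm
  let L3 : (Fin 4 → ℤ) →ₗ[ℤ] A.axialModule :=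
    (evalMap C A'.α).codRestrict A.axialModule
      (fun v => mem_axial_of_compat A A'.α
        (fun e e' h => by rw [← hcoeff e e' h]; exact A'.congruence e e' h) v)
  have hL3inj : Function.Injective L3 := by
    rw [← LinearMap.ker_eq_bot, LinearMap.ker_eq_bot']
    intro v hv
    have hv' : evalMap C A'.α v = 0 := congrArg Subtype.val hv
    set p0 : JV 2 := mkV 0 1 (by decide) with hp0
    have hgen : ∀ j : Fin 4, dotL v (A'.α (C.ord p0 j)) = 0 := by
      intro j
      have h : (∑ i, v i * A'.α (C.ord p0 j) i) = 0 := congrFun (congrFun hv' p0) j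
      exact h
    have hle : Submodule.span ℤ (Set.range fun j => A'.α (C.ord p0 j))
        ≤ LinearMap.ker (dotL v) := by
      rw [Submodule.span_le]
      rintro x ⟨j, rfl⟩
      exact hgen j
    rw [hEff p0] at hle
    funext i
    have h := dotL_single v i
    rw [LinearMap.mem_ker.mp (hle (Submodule.mem_top (x := Pi.single i 1)))] at h
    exact (h.symm.trans rfl)
  have h4 : 4 ≤ Module.finrank ℤ A.axialModule := by
    have h := LinearMap.finrank_le_finrank_of_injective hL3inj
    rwa [Module.finrank_pi, Fintype.card_fin] at h
  omega
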